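/- For a positive definite m×m matrix M and a positive semidefinite m×m matrix N, the directional derivative of the Kiefer criterion Φ_p at M in the direction N, defined as lim_{β→0+} (Φ_p[(1-β)M + βN] - Φ_p[M])/β, equals Φ_p[M] · (tr[M^{-p-1}N]/tr[M^{-p}] - 1), for p > 0. -/

import Mathlib

/-!
Put `g β = tr ((M + β (N - M)) ^ (-p))`; along the segment `Φ_p = ((1/m) g) ^ (-1/p)`, so by the
chain rule it suffices that `g` has right derivative `-p tr (M ^ (-p-1) (N - M))` at `0`.

If `A, B` are symmetric with orthonormal eigenpairs `(aᵢ, uᵢ)` and `(bⱼ, vⱼ)`, then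
`tr (φ(A) ψ(B)) = ∑ᵢ ∑ⱼ φ aᵢ ψ bⱼ ⟪uᵢ, vⱼ⟫²`. Hence `tr f(B) - tr f(A) - tr (f'(A) (B - A))` is the
same weighted sum of the scalar Taylor remainders `f bⱼ - f aᵢ - f' aᵢ (bⱼ - aᵢ)`, which for
`f x = x ^ (-p)` are at most `K (bⱼ - aᵢ)²` as long as all eigenvalues stay above a fixed `c > 0`;
since `N` is positive semidefinite, this holds along the segment for small `β ≥ 0`. The weighted
sum of the `(bⱼ - aᵢ)²` is `tr ((B - A)²) = β² tr ((N - M)²)`, so the remainder is `O(β²)`.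
-/

open Matrix
open scoped Classical

/-- Real power of a symmetric matrix via spectral decomposition; 0 if not Hermitian. -/
noncomputable def mpow {m : ℕ} (M : Matrix (Fin m) (Fin m) ℝ) (p : ℝ) :
    Matrix (Fin m) (Fin m) ℝ :=
  if h : M.IsHermitian then
    (h.eigenvectorUnitary : Matrix (Fin m) (Fin m) ℝ) *
      Matrix.diagonal (fun i => (h.eigenvalues i) ^ p) *
      (star (h.eigenvectorUnitary : Matrix (Fin m) (Fin m) ℝ))
  else 0

/-- Kiefer's `Φ_p` criterion for `p > 0`, extended by `0` to singular matrices. -/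
noncomputable def Phip {m : ℕ} (p : ℝ) (M : Matrix (Fin m) (Fin m) ℝ) : ℝ :=
  if M.PosDef then ((1 / (m : ℝ)) * (mpow M (-p)).trace) ^ (-1 / p : ℝ) else 0

open Filter Topology

theorem Convex.abs_sub_sub_mul_sub_le_of_hasDerivWithinAt {s : Set ℝ} (hs : Convex ℝ s)
    {f f' f'' : ℝ → ℝ} {K : ℝ} (hf : ∀ x ∈ s, HasDerivWithinAt f (f' x) s x)
    (hf' : ∀ x ∈ s, HasDerivWithinAt f' (f'' x) s x) (hK : ∀ x ∈ s, |f'' x| ≤ K)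
    {x y : ℝ} (hx : x ∈ s) (hy : y ∈ s) :
    |f y - f x - f' x * (y - x)| ≤ K * (y - x) ^ 2 := by
  have hxy : Set.uIcc x y ⊆ s := hs.ordConnected.uIcc_subset hx hy
  have hderiv : ∀ t ∈ Set.uIcc x y,
      HasDerivWithinAt (fun t => f t - f' x * t) (f' t - f' x) (Set.uIcc x y) t := fun t ht => by
    simpa using ((hf t (hxy ht)).mono hxy).fun_sub ((hasDerivWithinAt_id t _).const_mul (f' x))
  have hbound : ∀ t ∈ Set.uIcc x y, ‖f' t - f' x‖ ≤ K * |y - x| := fun t ht => by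
    calc ‖f' t - f' x‖ ≤ K * ‖t - x‖ :=
          hs.norm_image_sub_le_of_norm_hasDerivWithin_le hf' (fun z hz => hK z hz) hx (hxy ht)
      _ ≤ K * |y - x| :=
          mul_le_mul_of_nonneg_left (Set.abs_sub_left_of_mem_uIcc ht)
            ((abs_nonneg _).trans (hK x hx))
  have := (convex_uIcc x y).norm_image_sub_le_of_norm_hasDerivWithin_le hderiv hbound
    Set.left_mem_uIcc Set.right_mem_uIcc
  rw [Real.norm_eq_abs, Real.norm_eq_abs] at this
  calc |f y - f x - f' x * (y - x)| = |f y - f' x * y - (f x - f' x * x)| := by ring_nf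
    _ ≤ K * |y - x| * |y - x| := this
    _ = K * (y - x) ^ 2 := by rw [mul_assoc, abs_mul_abs_self, sq]

theorem Real.abs_rpow_sub_rpow_sub_mul_le {r c x y : ℝ} (hr : r ≤ 2) (hc : 0 < c) (hx : c ≤ x)
    (hy : c ≤ y) :
    |y ^ r - x ^ r - r * x ^ (r - 1) * (y - x)| ≤ |r * (r - 1)| * c ^ (r - 2) * (y - x) ^ 2 := by
  have hne : ∀ t ∈ Set.Ici c, t ≠ 0 := fun t ht => (hc.trans_le ht).ne'
  refine (convex_Ici c).abs_sub_sub_mul_sub_le_of_hasDerivWithinAt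
    (f' := fun t => r * t ^ (r - 1)) (f'' := fun t => r * (r - 1) * t ^ (r - 2))
    (fun t ht => (hasDerivAt_rpow_const (Or.inl (hne t ht))).hasDerivWithinAt)
    (fun t ht => ?_) (fun t ht => ?_) hx hy
  · have h := (hasDerivAt_rpow_const (p := r - 1) (Or.inl (hne t ht))).const_mul r
    rw [show r - 1 - 1 = r - 2 by ring, ← mul_assoc] at h
    exact h.hasDerivWithinAt
  · rw [abs_mul, abs_of_pos (rpow_pos_of_pos (hc.trans_le ht) _)]
    exact mul_le_mul_of_nonneg_left (rpow_le_rpow_of_nonpos hc ht (by linarith)) (abs_nonneg _)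

namespace Matrix

theorem trace_diagonal_mul_mul_diagonal_mul_transpose {n R : Type*} [Fintype n] [DecidableEq n]
    [CommRing R] (d e : n → R) (W : Matrix n n R) :
    (diagonal d * W * diagonal e * Wᵀ).trace = ∑ i, ∑ j, d i * e j * W i j ^ 2 := by
  have h : diagonal d * W * diagonal e = of fun i j => d i * W i j * e j := by
    ext i j; rw [mul_diagonal, diagonal_mul]; rfl
  simp only [h, trace, diag, mul_apply, of_apply, transpose_apply]
  exact Finset.sum_congr rfl fun i _ => Finset.sum_congr rfl fun j _ => by ring

namespace IsHermitian
variable {n : Type*} [Fintype n] [DecidableEq n] {A B C : Matrix n n ℝ}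

noncomputable def eigenOverlap (hA : A.IsHermitian) (hB : B.IsHermitian) (i j : n) : ℝ :=
  ((star (hA.eigenvectorUnitary : Matrix n n ℝ) * hB.eigenvectorUnitary) i j) ^ 2

theorem trace_cfc_mul_cfc (hA : A.IsHermitian) (hB : B.IsHermitian) (f g : ℝ → ℝ) :
    (cfc f A * cfc g B).trace =
      ∑ i, ∑ j, f (hA.eigenvalues i) * g (hB.eigenvalues j) * eigenOverlap hA hB i j := by
  set U : Matrix n n ℝ := ↑hA.eigenvectorUnitary
  set V : Matrix n n ℝ := ↑hB.eigenvectorUnitary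
  have hVU : star V * U = (star U * V)ᵀ := by
    simp [star_eq_conjTranspose, conjTranspose_eq_transpose_of_trivial, transpose_mul]
  rw [hA.cfc_eq, hB.cfc_eq, IsHermitian.cfc, IsHermitian.cfc, Unitary.conjStarAlgAut_apply,
    Unitary.conjStarAlgAut_apply]
  calc _ = (diagonal (f ∘ hA.eigenvalues) * (star U * V) * diagonal (g ∘ hB.eigenvalues) *
        (star V * U)).trace := by
        simp only [Matrix.mul_assoc]
        rw [trace_mul_comm]
        simp only [RCLike.ofReal_real_eq_id, CompTriple.comp_eq, Matrix.mul_assoc]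
        rfl
    _ = _ := by
        rw [hVU, trace_diagonal_mul_mul_diagonal_mul_transpose]
        rfl

theorem abs_trace_cfc_sub_sub_le (hA : A.IsHermitian) (hB : B.IsHermitian) {f f' : ℝ → ℝ}
    {K : ℝ} (h : ∀ x ∈ spectrum ℝ A, ∀ y ∈ spectrum ℝ B,
      |f y - f x - f' x * (y - x)| ≤ K * (y - x) ^ 2) :
    |(cfc f B).trace - (cfc f A).trace - (cfc f' A * (B - A)).trace| ≤
      K * ((B - A) ^ 2).trace := by
  have hl : (cfc f B).trace - (cfc f A).trace - (cfc f' A * (B - A)).trace =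
      (cfc (1 : ℝ → ℝ) A * cfc f B).trace - (cfc f A * cfc (1 : ℝ → ℝ) B).trace
        - (cfc f' A * cfc (id : ℝ → ℝ) B).trace
        + (cfc (fun x => f' x * x) A * cfc (1 : ℝ → ℝ) B).trace := by
    rw [cfc_one ℝ A, cfc_one ℝ B, cfc_id ℝ B,
      cfc_mul f' (fun x : ℝ => x) A (A.finite_spectrum.continuousOn _), cfc_id' ℝ A,
      Matrix.mul_sub, trace_sub, one_mul, mul_one, mul_one]
    ring
  have hr : ((B - A) ^ 2).trace = (cfc (1 : ℝ → ℝ) A * cfc (· ^ 2 : ℝ → ℝ) B).trace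
      - 2 * (cfc (id : ℝ → ℝ) A * cfc (id : ℝ → ℝ) B).trace
      + (cfc (· ^ 2 : ℝ → ℝ) A * cfc (1 : ℝ → ℝ) B).trace := by
    rw [cfc_one ℝ A, cfc_one ℝ B, cfc_id ℝ A, cfc_id ℝ B, cfc_pow_id A 2, cfc_pow_id B 2,
      one_mul, mul_one, sq, sq, sq]
    simp only [Matrix.mul_sub, Matrix.sub_mul, trace_sub, trace_mul_comm B A]
    ring
  rw [hl, hr]
  simp only [trace_cfc_mul_cfc hA hB, Pi.one_apply, id_eq, ← Finset.sum_sub_distrib,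
    ← Finset.sum_add_distrib, Finset.mul_sum]
  refine (Finset.abs_sum_le_sum_abs _ _).trans (Finset.sum_le_sum fun i _ => ?_)
  refine (Finset.abs_sum_le_sum_abs _ _).trans (Finset.sum_le_sum fun j _ => ?_)
  have hij := h _ (hA.eigenvalues_mem_spectrum_real i) _ (hB.eigenvalues_mem_spectrum_real j)
  have hw : 0 ≤ eigenOverlap hA hB i j := sq_nonneg _
  calc _ = eigenOverlap hA hB i j * |f (hB.eigenvalues j) - f (hA.eigenvalues i)
        - f' (hA.eigenvalues i) * (hB.eigenvalues j - hA.eigenvalues i)| := by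
        rw [← abs_of_nonneg hw, ← abs_mul, abs_of_nonneg hw]
        ring_nf
    _ ≤ eigenOverlap hA hB i j * (K * (hB.eigenvalues j - hA.eigenvalues i) ^ 2) :=
        mul_le_mul_of_nonneg_left hij hw
    _ = _ := by ring

theorem trace_cfc (hA : A.IsHermitian) (f : ℝ → ℝ) :
    (cfc f A).trace = ∑ i, f (hA.eigenvalues i) := by
  rw [hA.cfc_eq, IsHermitian.cfc, Unitary.conjStarAlgAut_apply, trace_mul_comm,
    ← Matrix.mul_assoc, Unitary.coe_star_mul_self, Matrix.one_mul, trace_diagonal]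
  rfl

open scoped MatrixOrder in
theorem spectrum_subset_Ici_iff (hA : A.IsHermitian) (r : ℝ) :
    spectrum ℝ A ⊆ Set.Ici r ↔ (A - r • 1).PosSemidef := by
  rw [← le_iff, ← Algebra.algebraMap_eq_smul_one,
    algebraMap_le_iff_le_spectrum hA.isSelfAdjoint]
  rfl

theorem hasDerivWithinAt_trace_cfc (hA : A.IsHermitian) (hC : C.IsHermitian) {f f' : ℝ → ℝ}
    {K : ℝ} {s T : Set ℝ}
    (hf : ∀ x ∈ s, ∀ y ∈ s, |f y - f x - f' x * (y - x)| ≤ K * (y - x) ^ 2)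
    (hAs : spectrum ℝ A ⊆ s) (hspec : ∀ᶠ t in 𝓝[T] 0, spectrum ℝ (A + t • C) ⊆ s) :
    HasDerivWithinAt (fun t => (cfc f (A + t • C)).trace) (cfc f' A * C).trace T 0 := by
  rw [hasDerivWithinAt_iff_isLittleO]
  refine Asymptotics.IsBigO.trans_isLittleO (g := fun t : ℝ => t ^ 2) ?_
    (by simpa using (Asymptotics.isLittleO_pow_id one_lt_two).mono nhdsWithin_le_nhds)
  refine Asymptotics.IsBigO.of_bound (K * (C ^ 2).trace) ?_
  filter_upwards [hspec] with t ht
  have hB : (A + t • C).IsHermitian := hA.add (hC.smul (IsSelfAdjoint.all t))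
  have h := abs_trace_cfc_sub_sub_le hA hB fun x hx y hy => hf x (hAs hx) y (ht hy)
  rw [add_sub_cancel_left, smul_pow, trace_smul, Matrix.mul_smul, trace_smul] at h
  simpa [Real.norm_eq_abs, sq_abs, mul_comm, mul_left_comm, mul_assoc] using h

end IsHermitian

theorem PosDef.exists_pos_posSemidef_sub_smul_one {n : Type*} [Fintype n] [DecidableEq n]
    {M : Matrix n n ℝ} (hM : M.PosDef) : ∃ c : ℝ, 0 < c ∧ (M - c • 1).PosSemidef := by
  cases isEmpty_or_nonempty n
  · exact ⟨1, one_pos, Subsingleton.elim 0 (M - (1 : ℝ) • 1) ▸ PosSemidef.zero⟩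
  obtain ⟨i₀, hi₀⟩ := Finite.exists_min hM.1.eigenvalues
  refine ⟨hM.1.eigenvalues i₀, hM.eigenvalues_pos i₀, (hM.1.spectrum_subset_Ici_iff _).1 ?_⟩
  rw [hM.1.spectrum_real_eq_range_eigenvalues]
  rintro _ ⟨i, rfl⟩
  exact hi₀ i

theorem PosSemidef.add_smul_sub_sub_smul_one {n : Type*} [DecidableEq n]
    {M N : Matrix n n ℝ} {c β : ℝ} (hM : (M - c • 1).PosSemidef) (hN : N.PosSemidef)
    (hc : 0 ≤ c) (hβ₀ : 0 ≤ β) (hβ : β ≤ 1 / 2) : (M + β • (N - M) - (c / 2) • 1).PosSemidef := by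
  have h : M + β • (N - M) - (c / 2) • 1 =
      (1 - β) • (M - c • 1) + ((1 / 2 - β) * c) • (1 : Matrix n n ℝ) + β • N := by
    module
  rw [h]
  exact ((hM.smul (by linarith)).add (PosSemidef.one.smul (by nlinarith))).add (hN.smul hβ₀)

theorem PosDef.hasDerivWithinAt_trace_cfc_rpow {n : Type*} [Fintype n] [DecidableEq n]
    {M N : Matrix n n ℝ} (hM : M.PosDef) (hN : N.PosSemidef) {r : ℝ} (hr : r ≤ 2) :
    HasDerivWithinAt (fun β : ℝ => (cfc (· ^ r : ℝ → ℝ) (M + β • (N - M))).trace)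
      (r * ((cfc (· ^ (r - 1) : ℝ → ℝ) M * N).trace - (cfc (· ^ r : ℝ → ℝ) M).trace))
      (Set.Ici 0) 0 := by
  obtain ⟨c, hc, hMc⟩ := hM.exists_pos_posSemidef_sub_smul_one
  have hseg : ∀ β ∈ Set.Icc (0 : ℝ) (1 / 2), spectrum ℝ (M + β • (N - M)) ⊆ Set.Ici (c / 2) :=
    fun β hβ => ((hM.1.add ((hN.1.sub hM.1).smul (IsSelfAdjoint.all β))).spectrum_subset_Ici_iff
      _).2 (hMc.add_smul_sub_sub_smul_one hN hc.le hβ.1 hβ.2)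
  have hMs : spectrum ℝ M ⊆ Set.Ici (c / 2) := by
    simpa using hseg 0 ⟨le_rfl, by norm_num⟩
  have hpos : ∀ x ∈ spectrum ℝ M, 0 < x := fun x hx => (half_pos hc).trans_le (hMs hx)
  have hcont : ∀ g : ℝ → ℝ, ContinuousOn g (spectrum ℝ M) := fun g =>
    M.finite_spectrum.continuousOn g
  have hmul : cfc (· ^ (r - 1) : ℝ → ℝ) M * M = cfc (· ^ r : ℝ → ℝ) M := by
    conv_lhs => arg 2; rw [← cfc_id' ℝ M hM.1.isSelfAdjoint]
    rw [← cfc_mul _ _ M (hcont _) (hcont _)]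
    refine cfc_congr fun x hx => ?_
    rw [Real.rpow_sub_one (hpos x hx).ne', div_mul_cancel₀ _ (hpos x hx).ne']
  have h := hM.1.hasDerivWithinAt_trace_cfc (hN.1.sub hM.1) (f' := fun x => r * x ^ (r - 1))
    (fun x hx y hy => Real.abs_rpow_sub_rpow_sub_mul_le hr (half_pos hc) hx hy) hMs
    (eventually_of_mem (Icc_mem_nhdsGE (by norm_num)) hseg)
  rwa [cfc_const_mul r _ M (hcont _), Matrix.smul_mul, trace_smul, Matrix.mul_sub, trace_sub,
    hmul, smul_eq_mul] at h

end Matrix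

theorem mpow_eq_cfc {m : ℕ} {X : Matrix (Fin m) (Fin m) ℝ} (hX : X.IsHermitian) (r : ℝ) :
    mpow X r = cfc (· ^ r : ℝ → ℝ) X := by
  rw [mpow, dif_pos hX, hX.cfc_eq, IsHermitian.cfc, Unitary.conjStarAlgAut_apply]
  rfl

theorem Phip_of_isEmpty {m : ℕ} [IsEmpty (Fin m)] {p : ℝ} (hp : p ≠ 0)
    (X : Matrix (Fin m) (Fin m) ℝ) : Phip p X = 0 := by
  simp [Phip, trace, Real.zero_rpow (div_ne_zero (neg_ne_zero.2 one_ne_zero) hp)]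

theorem hasDerivWithinAt_Phip_segment {m : ℕ} {p : ℝ} (hp : 0 < p)
    {M N : Matrix (Fin m) (Fin m) ℝ} (hM : M.PosDef) (hN : N.PosSemidef) :
    HasDerivWithinAt (fun β : ℝ => Phip p ((1 - β) • M + β • N))
      (Phip p M * ((mpow M (-p - 1) * N).trace / (mpow M (-p)).trace - 1)) (Set.Ici 0) 0 := by
  cases isEmpty_or_nonempty (Fin m)
  · simpa [Phip_of_isEmpty hp.ne'] using hasDerivWithinAt_const 0 (Set.Ici 0) (0 : ℝ)
  have hm : (0 : ℝ) < m := Nat.cast_pos.2 (Fin.pos_iff_nonempty.2 ‹_›)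
  have hT : 0 < (mpow M (-p)).trace := by
    rw [mpow_eq_cfc hM.1, hM.1.trace_cfc]
    exact Finset.sum_pos (fun i _ => Real.rpow_pos_of_pos (hM.eigenvalues_pos i) _)
      Finset.univ_nonempty
  have hpath : ∀ β : ℝ, (1 - β) • M + β • N = M + β • (N - M) := fun β => by module
  have hposdef : ∀ β ∈ Set.Ico (0 : ℝ) 1, ((1 - β) • M + β • N).PosDef := fun β hβ =>
    (hM.smul (sub_pos.2 hβ.2)).add_posSemidef (hN.smul hβ.1)
  have hΦ : ∀ β ∈ Set.Ico (0 : ℝ) 1, Phip p ((1 - β) • M + β • N) =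
      (1 / m * (cfc (· ^ (-p) : ℝ → ℝ) (M + β • (N - M))).trace) ^ (-1 / p) := fun β hβ => by
    rw [Phip, if_pos (hposdef β hβ), mpow_eq_cfc (hposdef β hβ).1, hpath]
  have h := ((hM.hasDerivWithinAt_trace_cfc_rpow hN (r := -p) (by linarith)).const_mul
    (1 / (m : ℝ))).rpow_const (p := -1 / p)
      (Or.inl (by rw [zero_smul, add_zero, ← mpow_eq_cfc hM.1]; positivity))
  refine (h.congr_of_eventuallyEq (eventually_of_mem (Ico_mem_nhdsGE one_pos) hΦ)
    (by simpa using hΦ 0 ⟨le_rfl, one_pos⟩)).congr_deriv ?_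
  simp only [← mpow_eq_cfc hM.1, zero_smul, add_zero, Phip, if_pos hM]
  rw [Real.rpow_sub_one (by positivity)]
  field_simp

theorem test {m : ℕ} (p : ℝ) (hp : 0 < p) (M N : Matrix (Fin m) (Fin m) ℝ)
    (hM : M.PosDef) (hN : N.PosSemidef) :
    Filter.Tendsto
      (fun β : ℝ => (Phip p ((1 - β) • M + β • N) - Phip p M) / β)
      (nhdsWithin 0 (Set.Ioi 0))
      (nhds (Phip p M * ((mpow M (-p - 1) * N).trace / (mpow M (-p)).trace - 1))) := by
  have h := (hasDerivWithinAt_Phip_segment hp hM hN).Ioi_of_Ici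
  rw [hasDerivWithinAt_iff_tendsto_slope' Set.self_notMem_Ioi] at h
  exact h.congr fun β => by simp [slope_def_field]
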